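/- Let (μ, (f_i)) and (μ', (f_i')) be two nonnegative monic systems on K_N. If μ and μ' are mutually singular, then any bounded operator W : L²(μ) → L²(μ') intertwining the two associated Cuntz-algebra representations (W S_i = S_i' W for all i) is zero. -/

import Mathlib

/-!
An intertwiner `W` commutes with multiplication by the indicator of every cylinder set. For a
one-letter cylinder `C(i)`, every `L²(μ)` function supported on `C(i)` lies in the range of `S_i`,
while the range of `S'_i` consists of functions supported on `C(i)`; as the `C(i)` partition `K_N`,
this forces `W χ_{C(i)} = χ_{C(i)} W`. The relation `χ_{C(iI)} S_i = S_i χ_{C(I)}`, valid in both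
representations, then carries the commutation from `C(I)` to `C(iI)`. Commuting with `χ_E`
survives complements and countable disjoint unions (in `L²`, by continuity of `W`), so by the
π-λ theorem `W χ_E = χ_E W` for every Borel set `E`. For a Borel set `E` with `μ E = 0` and
`μ' Eᶜ = 0` this gives `W g = W (χ_{Eᶜ} g) = χ_{Eᶜ} (W g) = 0`.
-/

open MeasureTheory ENNReal

noncomputable section

abbrev Word (N : ℕ) := ℕ → Fin N

/-- The left shift `σ` deleting the first letter. -/
def shift {N : ℕ} (ω : Word N) : Word N := fun n => ω (n + 1)

/-- The map `σ_i` prepending the letter `i`. -/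
def prepend {N : ℕ} (i : Fin N) (ω : Word N) : Word N :=
  fun n => match n with
  | 0 => i
  | n + 1 => ω n

/-- The cylinder set determined by a finite word. -/
def cyl {N : ℕ} (w : List (Fin N)) : Set (Word N) :=
  {ω | ∀ k : Fin w.length, ω k = w.get k}

open Filter Topology Function

lemma MeasureTheory.Lp.coeFn_finset_sum {α E ι : Type*} [MeasurableSpace α] [NormedAddCommGroup E]
    {p : ℝ≥0∞} {μ : Measure α} (s : Finset ι) (g : ι → Lp E p μ) :
    ⇑(∑ j ∈ s, g j) =ᵐ[μ] ∑ j ∈ s, ⇑(g j) := by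
  classical
  induction s using Finset.induction_on with
  | empty => simpa using Lp.coeFn_zero E p μ
  | insert j s hj ih =>
    rw [Finset.sum_insert hj, Finset.sum_insert hj]
    filter_upwards [Lp.coeFn_add (g j) (∑ j ∈ s, g j), ih] with x h₁ h₂
    rw [h₁, Pi.add_apply, h₂, Pi.add_apply]

section IndicatorLp

variable {α E : Type*} [MeasurableSpace α] [NormedAddCommGroup E] {p : ℝ≥0∞} {μ : Measure α}

def indicatorLp (s : Set α) (hs : MeasurableSet s) (g : Lp E p μ) : Lp E p μ :=
  ((Lp.memLp g).indicator hs).toLp (s.indicator g)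

variable {s t : Set α} (hs : MeasurableSet s) (ht : MeasurableSet t) (g : Lp E p μ)

lemma coeFn_indicatorLp : ⇑(indicatorLp s hs g) =ᵐ[μ] s.indicator g :=
  MemLp.coeFn_toLp _

lemma indicatorLp_ae_eq_zero_of_notMem : ∀ᵐ x ∂μ, x ∉ s → indicatorLp s hs g x = 0 := by
  filter_upwards [coeFn_indicatorLp hs g] with x hx hxs
  rw [hx, Set.indicator_of_notMem hxs]

lemma indicatorLp_of_measure_eq_zero (hμs : μ s = 0) : indicatorLp s hs g = 0 := by
  refine Lp.ext ((coeFn_indicatorLp hs g).trans ?_)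
  filter_upwards [measure_eq_zero_iff_ae_notMem.mp hμs, Lp.coeFn_zero E p μ] with x hx h0
  rw [Set.indicator_of_notMem hx, h0, Pi.zero_apply]

lemma indicatorLp_of_ae_mem (h : ∀ᵐ x ∂μ, x ∈ s) : indicatorLp s hs g = g := by
  refine Lp.ext ((coeFn_indicatorLp hs g).trans ?_)
  filter_upwards [h] with x hx using Set.indicator_of_mem hx g

lemma indicatorLp_compl : indicatorLp sᶜ hs.compl g = g - indicatorLp s hs g := by
  refine Lp.ext ?_
  filter_upwards [coeFn_indicatorLp hs.compl g, coeFn_indicatorLp hs g, Lp.coeFn_sub g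
    (indicatorLp s hs g)] with x h₁ h₂ h₃
  rw [h₁, h₃, Pi.sub_apply, h₂, Set.indicator_compl, Pi.sub_apply]

lemma indicatorLp_union (hst : Disjoint s t) :
    indicatorLp (s ∪ t) (hs.union ht) g = indicatorLp s hs g + indicatorLp t ht g := by
  refine Lp.ext ?_
  filter_upwards [coeFn_indicatorLp (hs.union ht) g, coeFn_indicatorLp hs g,
    coeFn_indicatorLp ht g, Lp.coeFn_add (indicatorLp s hs g) (indicatorLp t ht g)]
    with x h₁ h₂ h₃ h₄
  rw [h₁, h₄, Pi.add_apply, h₂, h₃, Set.indicator_union_of_disjoint hst]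

lemma indicatorLp_indicatorLp_of_subset (hst : s ⊆ t) :
    indicatorLp s hs (indicatorLp t ht g) = indicatorLp s hs g := by
  refine Lp.ext ?_
  filter_upwards [coeFn_indicatorLp hs (indicatorLp t ht g), coeFn_indicatorLp ht g,
    coeFn_indicatorLp hs g] with x h₁ h₂ h₃
  rw [h₁, h₃]
  by_cases hx : x ∈ s
  · rw [Set.indicator_of_mem hx, Set.indicator_of_mem hx, h₂, Set.indicator_of_mem (hst hx)]
  · rw [Set.indicator_of_notMem hx, Set.indicator_of_notMem hx]

lemma tendsto_indicatorLp_iUnion [IsFiniteMeasure μ] [Fact (1 ≤ p)] (hp : p ≠ ∞)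
    {s : ℕ → Set α} (hs : ∀ n, MeasurableSet (s n)) (hmono : Monotone s) :
    Tendsto (fun n => indicatorLp (s n) (hs n) g) atTop
      (𝓝 (indicatorLp (⋃ n, s n) (.iUnion hs) g)) := by
  rw [Lp.tendsto_Lp_iff_tendsto_eLpNorm']
  have hdiff : ∀ n, eLpNorm (⇑(indicatorLp (s n) (hs n) g) - ⇑(indicatorLp _ (.iUnion hs) g)) p μ
      = eLpNorm (((⋃ n, s n) \ s n).indicator g) p μ := fun n => by
    rw [eLpNorm_congr_ae ((coeFn_indicatorLp _ g).sub (coeFn_indicatorLp _ g)),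
      eLpNorm_indicator_sub_indicator, symmDiff_of_le (Set.subset_iUnion s n)]
  have hμ : Tendsto (fun n => μ ((⋃ n, s n) \ s n)) atTop (𝓝 0) := by
    have := tendsto_measure_iInter_atTop (μ := μ)
      (fun n => ((MeasurableSet.iUnion hs).diff (hs n)).nullMeasurableSet)
      (fun m n hmn => Set.sdiff_subset_sdiff_right (hmono hmn)) ⟨0, measure_ne_top μ _⟩
    rwa [← Set.sdiff_iUnion, Set.sdiff_self, measure_empty] at this
  simp only [hdiff]
  refine ENNReal.tendsto_nhds_zero.mpr fun ε hε => ?_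
  rcases eq_or_ne ε ∞ with rfl | hε_top
  · exact Eventually.of_forall fun _ => le_top
  obtain ⟨δ, hδ, hδε⟩ := (Lp.memLp g).eLpNorm_indicator_le Fact.out hp
    (ENNReal.toReal_pos hε.ne' hε_top)
  filter_upwards [(ENNReal.tendsto_nhds_zero.mp hμ) _ (ENNReal.ofReal_pos.mpr hδ)] with n hn
  simpa [ENNReal.ofReal_toReal hε_top] using
    hδε _ ((MeasurableSet.iUnion hs).diff (hs n)) hn

lemma sum_indicatorLp_fibers {ι : Type*} [Fintype ι] {π : α → ι}
    (hπ : ∀ j, MeasurableSet {x | π x = j}) : ∑ j, indicatorLp _ (hπ j) g = g := by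
  refine Lp.ext ((Lp.coeFn_finset_sum _ _).trans ?_)
  filter_upwards [ae_all_iff.mpr fun j => coeFn_indicatorLp (hπ j) g] with x hx
  rw [Finset.sum_apply, Finset.sum_eq_single_of_mem (π x) (Finset.mem_univ _)
    fun j _ hj => by rw [hx j, Set.indicator_of_notMem (s := {y | π y = j}) (Ne.symm hj)], hx,
    Set.indicator_of_mem (s := {y | π y = π x}) rfl]

end IndicatorLp

section IndicatorCommute

variable {α E F 𝕜 : Type*} [MeasurableSpace α] [NormedAddCommGroup E] [NormedAddCommGroup F]
  [NormedField 𝕜] [NormedSpace 𝕜 E] [NormedSpace 𝕜 F] {p : ℝ≥0∞} [Fact (1 ≤ p)]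
  {μ ν : Measure α}

def IndicatorCommute (W : Lp E p μ →L[𝕜] Lp F p ν) (s : Set α) (hs : MeasurableSet s) : Prop :=
  ∀ g, W (indicatorLp s hs g) = indicatorLp s hs (W g)

variable {W : Lp E p μ →L[𝕜] Lp F p ν} {s t : Set α} {hs : MeasurableSet s}
  {ht : MeasurableSet t}

lemma indicatorCommute_empty : IndicatorCommute W ∅ .empty := fun g => by
  rw [indicatorLp_of_measure_eq_zero _ _ measure_empty,
    indicatorLp_of_measure_eq_zero _ _ measure_empty, map_zero]

lemma IndicatorCommute.compl (h : IndicatorCommute W s hs) : IndicatorCommute W sᶜ hs.compl :=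
  fun g => by rw [indicatorLp_compl hs, indicatorLp_compl hs, map_sub, h]

lemma IndicatorCommute.union (h₁ : IndicatorCommute W s hs) (h₂ : IndicatorCommute W t ht)
    (hst : Disjoint s t) : IndicatorCommute W (s ∪ t) (hs.union ht) :=
  fun g => by rw [indicatorLp_union hs ht _ hst, indicatorLp_union hs ht _ hst, map_add, h₁, h₂]

lemma IndicatorCommute.iUnion [IsFiniteMeasure μ] [IsFiniteMeasure ν] (hp : p ≠ ∞)
    {s : ℕ → Set α} (hs : ∀ n, MeasurableSet (s n)) (hdisj : Pairwise (Disjoint on s))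
    (h : ∀ n, IndicatorCommute W (s n) (hs n)) :
    IndicatorCommute W (⋃ n, s n) (.iUnion hs) := by
  have hacc : ∀ n, MeasurableSet (Set.accumulate s n) := fun n =>
    .iUnion fun k => .iUnion fun _ => hs k
  have hcomm : ∀ n, IndicatorCommute W (Set.accumulate s n) (hacc n) := by
    intro n
    induction n with
    | zero => simpa only [Set.accumulate_zero_nat] using h 0
    | succ n ih =>
      simpa only [Set.accumulate_succ] using
        ih.union (h (n + 1)) (Set.disjoint_accumulate hdisj n.lt_succ_self)
  intro g
  have hW := (W.continuous.tendsto _).comp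
    (tendsto_indicatorLp_iUnion g hp hacc Set.monotone_accumulate)
  have hWg := tendsto_indicatorLp_iUnion (W g) hp hacc Set.monotone_accumulate
  simp only [Set.iUnion_accumulate] at hW hWg
  exact tendsto_nhds_unique hW (hWg.congr fun n => (hcomm n g).symm)

lemma indicatorCommute_of_generateFrom [IsFiniteMeasure μ] [IsFiniteMeasure ν] (hp : p ≠ ∞)
    {C : Set (Set α)} (hgen : ‹MeasurableSpace α› = .generateFrom C) (hC : IsPiSystem C)
    (h : ∀ s (hs : MeasurableSet s), s ∈ C → IndicatorCommute W s hs) :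
    ∀ s (hs : MeasurableSet s), IndicatorCommute W s hs :=
  MeasurableSpace.induction_on_inter hgen hC indicatorCommute_empty
    (fun s hsC => h s _ hsC) (fun _ _ hs => hs.compl)
    (fun _ hdisj hs h => IndicatorCommute.iUnion hp hs hdisj h)

lemma indicatorCommute_of_fibers {ι : Type*} [Fintype ι] {π : α → ι}
    (hπ : ∀ j, MeasurableSet {x | π x = j})
    (hW : ∀ j g, ∀ᵐ x ∂ν, π x ≠ j → W (indicatorLp _ (hπ j) g) x = 0) (j : ι) :
    IndicatorCommute W _ (hπ j) := by
  intro g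
  have hWg : ⇑(W g) =ᵐ[ν] ∑ k, ⇑(W (indicatorLp _ (hπ k) g)) := by
    conv_lhs => rw [← sum_indicatorLp_fibers g hπ, map_sum]
    exact Lp.coeFn_finset_sum _ _
  refine Lp.ext ?_
  filter_upwards [coeFn_indicatorLp (hπ j) (W g), ae_all_iff.mpr (hW · g), hWg]
    with x h₁ h₂ h₃
  rw [h₁]
  by_cases hx : π x = j
  · rw [Set.indicator_of_mem (s := {y | π y = j}) hx, h₃, Finset.sum_apply,
      Finset.sum_eq_single_of_mem j (Finset.mem_univ _)
        fun k _ hk => h₂ k (hx.trans_ne (Ne.symm hk))]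
  · rw [Set.indicator_of_notMem (s := {y | π y = j}) hx, h₂ j hx]

lemma IndicatorCommute.of_intertwine {A B C : Set α} {hA : MeasurableSet A}
    {hB : MeasurableSet B} {hC : MeasurableSet C} (hA_comm : IndicatorCommute W A hA)
    (hC_comm : IndicatorCommute W C hC) (hBA : B ⊆ A)
    {S : Lp E p μ →L[𝕜] Lp E p μ} {S' : Lp F p ν →L[𝕜] Lp F p ν} (hW : W.comp S = S'.comp W)
    (hS_range : ∀ g, ∃ h, S h = indicatorLp A hA g)
    (hS : ∀ g, indicatorLp B hB (S g) = S (indicatorLp C hC g))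
    (hS' : ∀ g, indicatorLp B hB (S' g) = S' (indicatorLp C hC g)) :
    IndicatorCommute W B hB := by
  intro g
  obtain ⟨h, hh⟩ := hS_range g
  have hWS : ∀ g, W (S g) = S' (W g) := fun g => congrArg (· g) hW
  calc W (indicatorLp B hB g)
      = W (indicatorLp B hB (S h)) := by rw [hh, indicatorLp_indicatorLp_of_subset hB hA g hBA]
    _ = S' (indicatorLp C hC (W h)) := by rw [hS, hWS, hC_comm]
    _ = indicatorLp B hB (W (indicatorLp A hA g)) := by rw [← hS', ← hWS, hh]
    _ = indicatorLp B hB (W g) := by rw [hA_comm, indicatorLp_indicatorLp_of_subset hB hA _ hBA]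

end IndicatorCommute

section Words

variable {N : ℕ}

lemma measurable_shift : Measurable (shift : Word N → Word N) :=
  measurable_pi_iff.mpr fun n => measurable_pi_apply (n + 1)

lemma measurable_prepend (i : Fin N) : Measurable (prepend i) :=
  measurable_pi_iff.mpr fun n => match n with
    | 0 => measurable_const
    | n + 1 => measurable_pi_apply n

@[simp] lemma shift_comp_prepend (i : Fin N) : shift ∘ prepend i = id := rfl

lemma prepend_shift {i : Fin N} {x : Word N} (h : x 0 = i) : prepend i (shift x) = x := by
  funext n
  cases n with
  | zero => exact h.symm
  | succ n => rfl

lemma measurableSet_head_eq (i : Fin N) : MeasurableSet {x : Word N | x 0 = i} :=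
  measurableSet_eq_fun (measurable_pi_apply 0) measurable_const

lemma mem_cyl_ofFn {n : ℕ} {v : Fin n → Fin N} {x : Word N} :
    x ∈ cyl (List.ofFn v) ↔ ∀ k : Fin n, x k = v k := by
  simp [cyl, Fin.forall_iff]

@[simp] lemma cyl_nil : cyl ([] : List (Fin N)) = Set.univ := by
  simp [cyl]

lemma cyl_cons (i : Fin N) (w : List (Fin N)) :
    cyl (i :: w) = {x | x 0 = i} ∩ shift ⁻¹' cyl w := by
  ext x
  simp [cyl, Fin.forall_fin_succ, shift]

lemma measurableSet_cyl (w : List (Fin N)) : MeasurableSet (cyl w) := by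
  induction w with
  | nil => simp
  | cons i w ih => rw [cyl_cons]; exact (measurableSet_head_eq i).inter (measurable_shift ih)

lemma cyl_subset_cyl {v w : List (Fin N)} {x : Word N} (hxv : x ∈ cyl v) (hxw : x ∈ cyl w)
    (hvw : v.length ≤ w.length) : cyl w ⊆ cyl v := fun _ hy k =>
  (hy ⟨k, k.2.trans_le hvw⟩).trans ((hxw ⟨k, k.2.trans_le hvw⟩).symm.trans (hxv k))

lemma isPiSystem_range_cyl : IsPiSystem (Set.range (cyl (N := N))) := by
  rintro _ ⟨v, rfl⟩ _ ⟨w, rfl⟩ ⟨x, hxv, hxw⟩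
  rcases le_total v.length w.length with h | h
  · exact ⟨w, (Set.inter_eq_right.mpr (cyl_subset_cyl hxv hxw h)).symm⟩
  · exact ⟨v, (Set.inter_eq_left.mpr (cyl_subset_cyl hxw hxv h)).symm⟩

lemma measurableSpace_eq_generateFrom_cyl :
    (MeasurableSpace.pi : MeasurableSpace (Word N)) = .generateFrom (Set.range cyl) := by
  refine le_antisymm (iSup_le fun n => ?_) (MeasurableSpace.generateFrom_le ?_)
  · rintro _ ⟨s, -, rfl⟩
    have hunion : (fun x : Word N => x n) ⁻¹' s =
        ⋃ w ∈ {w | cyl w ⊆ (fun x : Word N => x n) ⁻¹' s}, cyl w := by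
      refine subset_antisymm (fun x hx => Set.mem_biUnion (fun y hy => ?_)
        (mem_cyl_ofFn.mpr fun k : Fin (n + 1) => rfl)) (Set.iUnion₂_subset fun w hw => hw)
      have hyx : y n = x n := (mem_cyl_ofFn.mp hy) (Fin.last n)
      exact Set.mem_preimage.mpr (hyx ▸ hx)
    rw [hunion]
    exact .biUnion (Set.to_countable _) fun w _ => .basic _ ⟨w, rfl⟩
  · rintro _ ⟨w, rfl⟩
    exact measurableSet_cyl w

end Words

section WeightedShift

variable {N : ℕ} {μ : Measure (Word N)} {i : Fin N} {φ : Word N → ℝ}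

lemma measurePreserving_shift_map_prepend (i : Fin N) :
    MeasurePreserving shift (μ.map (prepend i)) μ :=
  ⟨measurable_shift, by
    rw [Measure.map_map measurable_shift (measurable_prepend i), shift_comp_prepend,
      Measure.map_id]⟩

variable [IsFiniteMeasure μ]

lemma ae_imp_of_ae_map_prepend
    (hrn : (μ.map (prepend i)).rnDeriv μ =ᵐ[μ] fun x => ENNReal.ofReal (φ x ^ 2))
    {p : Word N → Prop} (h : ∀ᵐ x ∂μ.map (prepend i), p x) : ∀ᵐ x ∂μ, φ x ≠ 0 → p x := by
  filter_upwards [Measure.ae_rnDeriv_ne_zero_imp_of_ae μ h, hrn] with x hx hρ hφ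
  exact hx (by rw [hρ]; positivity)

lemma ae_eq_zero_of_head_ne
    (hrn : (μ.map (prepend i)).rnDeriv μ =ᵐ[μ] fun x => ENNReal.ofReal (φ x ^ 2)) :
    ∀ᵐ x ∂μ, x 0 ≠ i → φ x = 0 := by
  have h : ∀ᵐ x ∂μ.map (prepend i), x 0 = i :=
    (ae_map_iff (measurable_prepend i).aemeasurable (measurableSet_head_eq i)).mpr
      (ae_of_all _ fun _ => rfl)
  filter_upwards [ae_imp_of_ae_map_prepend hrn h] with x hx hne
  exact by_contra fun hφ => hne (hx hφ)

lemma ae_comp_shift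
    (hrn : (μ.map (prepend i)).rnDeriv μ =ᵐ[μ] fun x => ENNReal.ofReal (φ x ^ 2))
    {p : Word N → Prop} (h : ∀ᵐ x ∂μ, p x) : ∀ᵐ x ∂μ, φ x ≠ 0 → p (shift x) :=
  ae_imp_of_ae_map_prepend hrn ((measurePreserving_shift_map_prepend i).quasiMeasurePreserving.ae h)

variable {T : Lp ℂ 2 μ →L[ℂ] Lp ℂ 2 μ}

lemma weightedShift_ae_eq_zero_of_head_ne
    (hrn : (μ.map (prepend i)).rnDeriv μ =ᵐ[μ] fun x => ENNReal.ofReal (φ x ^ 2))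
    (hT : ∀ g : Lp ℂ 2 μ, ⇑(T g) =ᵐ[μ] fun x => (φ x : ℂ) * g (shift x)) (g : Lp ℂ 2 μ) :
    ∀ᵐ x ∂μ, x 0 ≠ i → T g x = 0 := by
  filter_upwards [hT g, ae_eq_zero_of_head_ne hrn] with x h₁ h₂ hx
  rw [h₁, h₂ hx, Complex.ofReal_zero, zero_mul]

lemma indicatorLp_weightedShift
    (hrn : (μ.map (prepend i)).rnDeriv μ =ᵐ[μ] fun x => ENNReal.ofReal (φ x ^ 2))
    (hT : ∀ g : Lp ℂ 2 μ, ⇑(T g) =ᵐ[μ] fun x => (φ x : ℂ) * g (shift x))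
    {E : Set (Word N)} (hE : MeasurableSet E) (g : Lp ℂ 2 μ) :
    indicatorLp _ ((measurableSet_head_eq i).inter (measurable_shift hE)) (T g) =
      T (indicatorLp E hE g) := by
  refine Lp.ext ?_
  filter_upwards [coeFn_indicatorLp _ (T g), hT g, hT (indicatorLp E hE g),
    ae_comp_shift hrn (coeFn_indicatorLp hE g), ae_eq_zero_of_head_ne hrn]
    with x h₁ h₂ h₃ h₄ h₅
  rw [h₁, h₃]
  by_cases hφ : φ x = 0
  · simp [h₂, hφ]
  have hx0 : x 0 = i := not_imp_comm.mp h₅ hφ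
  rw [h₄ hφ]
  by_cases hxE : shift x ∈ E
  · rw [Set.indicator_of_mem (show x ∈ {x | x 0 = i} ∩ shift ⁻¹' E from ⟨hx0, hxE⟩),
      Set.indicator_of_mem hxE, h₂]
  · rw [Set.indicator_of_notMem (fun h => hxE h.2), Set.indicator_of_notMem hxE, mul_zero]

lemma exists_weightedShift_eq (hφ : AEStronglyMeasurable φ μ) (hac : μ.map (prepend i) ≪ μ)
    (hrn : (μ.map (prepend i)).rnDeriv μ =ᵐ[μ] fun x => ENNReal.ofReal (φ x ^ 2))
    (hne : ∀ᵐ x ∂μ, x 0 = i → φ x ≠ 0)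
    (hT : ∀ g : Lp ℂ 2 μ, ⇑(T g) =ᵐ[μ] fun x => (φ x : ℂ) * g (shift x))
    {u : Lp ℂ 2 μ} (hu : ∀ᵐ x ∂μ, x 0 ≠ i → u x = 0) : ∃ g, T g = u := by
  -- The preimage is `(u / φ) ∘ σ_i`: its L² norm is at most that of `u` because `φ²` is the
  -- density of `μ ∘ σ_i⁻¹`, and `u / φ` takes the junk value `0` where `φ` vanishes.
  set q : Word N → ℂ := fun y => u y / φ y
  have hq : AEStronglyMeasurable q μ :=
    ((Lp.aestronglyMeasurable u).aemeasurable.div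
      (Complex.measurable_ofReal.comp_aemeasurable hφ.aemeasurable)).aestronglyMeasurable
  have hq_map : MemLp q 2 (μ.map (prepend i)) := by
    have := Measure.haveLebesgueDecomposition_of_sigmaFinite (μ.map (prepend i)) μ
    rw [memLp_two_iff_integrable_sq_norm (hq.mono_ac hac), ← integrable_rnDeriv_smul_iff hac]
    refine ((memLp_two_iff_integrable_sq_norm (Lp.aestronglyMeasurable u)).mp (Lp.memLp u)).mono'
      ((Measure.measurable_rnDeriv _ _).ennreal_toReal.aestronglyMeasurable.smul
        (hq.norm.pow 2)) ?_
    filter_upwards [hrn] with x hx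
    have hsq : φ x ^ 2 * ‖q x‖ ^ 2 = ‖(φ x : ℂ) * q x‖ ^ 2 := by
      rw [norm_mul, mul_pow, Complex.norm_real, Real.norm_eq_abs, sq_abs]
    rw [hx, ENNReal.toReal_ofReal (sq_nonneg _), smul_eq_mul, Real.norm_of_nonneg (by positivity),
      hsq]
    gcongr
    rcases eq_or_ne (φ x) 0 with h | h
    · simp [h]
    · exact (congrArg norm (mul_div_cancel₀ _ (Complex.ofReal_ne_zero.mpr h))).le
  set g := (hq_map.comp_of_map (measurable_prepend i).aemeasurable).toLp (q ∘ prepend i)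
  have hg : ∀ᵐ x ∂μ, φ x ≠ 0 → g (shift x) = q (prepend i (shift x)) :=
    ae_comp_shift hrn (MemLp.coeFn_toLp _)
  refine ⟨g, Lp.ext ?_⟩
  filter_upwards [hT g, hg, hu, hne, ae_eq_zero_of_head_ne hrn] with x h₁ h₂ h₃ h₄ h₅
  rw [h₁]
  by_cases hx0 : x 0 = i
  · rw [h₂ (h₄ hx0), prepend_shift hx0]
    exact mul_div_cancel₀ _ (Complex.ofReal_ne_zero.mpr (h₄ hx0))
  · rw [h₅ hx0, h₃ hx0, Complex.ofReal_zero, zero_mul]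

end WeightedShift

lemma indicatorCommute_cyl {N : ℕ} {μ μ' : Measure (Word N)} [IsFiniteMeasure μ]
    [IsFiniteMeasure μ'] {f f' : Fin N → Word N → ℝ}
    (hf : ∀ i, AEStronglyMeasurable (f i) μ) (hac : ∀ i, μ.map (prepend i) ≪ μ)
    (hrn : ∀ i, (μ.map (prepend i)).rnDeriv μ =ᵐ[μ] fun x => ENNReal.ofReal (f i x ^ 2))
    (hrn' : ∀ i, (μ'.map (prepend i)).rnDeriv μ' =ᵐ[μ'] fun x => ENNReal.ofReal (f' i x ^ 2))
    (hne : ∀ i, ∀ᵐ x ∂μ, x 0 = i → f i x ≠ 0)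
    {S : Fin N → (Lp ℂ 2 μ →L[ℂ] Lp ℂ 2 μ)} {S' : Fin N → (Lp ℂ 2 μ' →L[ℂ] Lp ℂ 2 μ')}
    (hS : ∀ i (g : Lp ℂ 2 μ), ⇑(S i g) =ᵐ[μ] fun x => (f i x : ℂ) * g (shift x))
    (hS' : ∀ i (g : Lp ℂ 2 μ'), ⇑(S' i g) =ᵐ[μ'] fun x => (f' i x : ℂ) * g (shift x))
    {W : Lp ℂ 2 μ →L[ℂ] Lp ℂ 2 μ'} (hW : ∀ i, W.comp (S i) = (S' i).comp W)
    (w : List (Fin N)) : IndicatorCommute W (cyl w) (measurableSet_cyl w) := by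
  have hS_range : ∀ i g, ∃ h, S i h = indicatorLp _ (measurableSet_head_eq i) g := fun i g =>
    exists_weightedShift_eq (hf i) (hac i) (hrn i) (hne i) (hS i)
      (indicatorLp_ae_eq_zero_of_notMem (measurableSet_head_eq i) g)
  have hhead : ∀ i, IndicatorCommute W _ (measurableSet_head_eq i) :=
    indicatorCommute_of_fibers (π := fun x : Word N => x 0) measurableSet_head_eq fun j g => by
      obtain ⟨h, hh⟩ := hS_range j g
      rw [← hh, ← ContinuousLinearMap.comp_apply, hW j, ContinuousLinearMap.comp_apply]
      exact weightedShift_ae_eq_zero_of_head_ne (hrn' j) (hS' j) _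
  induction w with
  | nil =>
    simp only [cyl_nil]
    intro g
    rw [indicatorLp_of_ae_mem _ _ (ae_of_all _ Set.mem_univ),
      indicatorLp_of_ae_mem _ _ (ae_of_all _ Set.mem_univ)]
  | cons i w ih =>
    simpa only [cyl_cons] using (hhead i).of_intertwine ih Set.inter_subset_left (hW i)
      (hS_range i) (indicatorLp_weightedShift (hrn i) (hS i) _)
      (indicatorLp_weightedShift (hrn' i) (hS' i) _)

theorem nonneg_monicSystem_disjoint_of_mutuallySingular_general {N : ℕ}
    (μ μ' : Measure (Word N)) [IsFiniteMeasure μ] [IsFiniteMeasure μ']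
    (f f' : Fin N → Word N → ℝ)
    (hf2 : ∀ i, MemLp (f i) 2 μ)
    (hac : ∀ i, μ.map (prepend i) ≪ μ)
    (hrn : ∀ i, (μ.map (prepend i)).rnDeriv μ =ᵐ[μ]
      fun x => ENNReal.ofReal (f i x ^ 2))
    (hrn' : ∀ i, (μ'.map (prepend i)).rnDeriv μ' =ᵐ[μ']
      fun x => ENNReal.ofReal (f' i x ^ 2))
    (hne : ∀ i, ∀ᵐ x ∂μ, x 0 = i → f i x ≠ 0)
    (hsing : μ ⟂ₘ μ')
    (S : Fin N → (Lp ℂ 2 μ →L[ℂ] Lp ℂ 2 μ))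
    (S' : Fin N → (Lp ℂ 2 μ' →L[ℂ] Lp ℂ 2 μ'))
    (hS : ∀ i (g : Lp ℂ 2 μ), ⇑(S i g) =ᵐ[μ] fun x => (f i x : ℂ) * g (shift x))
    (hS' : ∀ i (g : Lp ℂ 2 μ'), ⇑(S' i g) =ᵐ[μ'] fun x => (f' i x : ℂ) * g (shift x))
    (W : Lp ℂ 2 μ →L[ℂ] Lp ℂ 2 μ')
    (hW : ∀ i, W.comp (S i) = (S' i).comp W) :
    W = 0 := by
  have hcomm := indicatorCommute_of_generateFrom (W := W) ENNReal.ofNat_ne_top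
    measurableSpace_eq_generateFrom_cyl isPiSystem_range_cyl fun _ _ ⟨w, hw⟩ => hw ▸
      indicatorCommute_cyl (fun i => (hf2 i).1) hac hrn hrn' hne hS hS' hW w
  obtain ⟨s, hs, hμs, hμ's⟩ := hsing
  ext1 g
  calc W g = W (indicatorLp sᶜ hs.compl g) := by
        rw [indicatorLp_of_ae_mem hs.compl g (measure_eq_zero_iff_ae_notMem.mp hμs)]
    _ = indicatorLp sᶜ hs.compl (W g) := hcomm _ _ g
    _ = 0 := indicatorLp_of_measure_eq_zero _ _ hμ's

theorem nonneg_monicSystem_disjoint_of_mutuallySingular {N : ℕ} (hN : 2 ≤ N)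
    (μ μ' : Measure (Word N)) [IsFiniteMeasure μ] [IsFiniteMeasure μ']
    (f f' : Fin N → Word N → ℝ)
    (hf0 : ∀ i x, 0 ≤ f i x) (hf0' : ∀ i x, 0 ≤ f' i x)
    (hf2 : ∀ i, MemLp (f i) 2 μ) (hf2' : ∀ i, MemLp (f' i) 2 μ')
    (hac : ∀ i, μ.map (prepend i) ≪ μ) (hac' : ∀ i, μ'.map (prepend i) ≪ μ')
    (hrn : ∀ i, (μ.map (prepend i)).rnDeriv μ =ᵐ[μ]
      fun x => ENNReal.ofReal (f i x ^ 2))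
    (hrn' : ∀ i, (μ'.map (prepend i)).rnDeriv μ' =ᵐ[μ']
      fun x => ENNReal.ofReal (f' i x ^ 2))
    (hne : ∀ i, ∀ᵐ x ∂μ, x 0 = i → f i x ≠ 0)
    (hne' : ∀ i, ∀ᵐ x ∂μ', x 0 = i → f' i x ≠ 0)
    (hsing : μ ⟂ₘ μ')
    (S : Fin N → (Lp ℂ 2 μ →L[ℂ] Lp ℂ 2 μ))
    (S' : Fin N → (Lp ℂ 2 μ' →L[ℂ] Lp ℂ 2 μ'))
    (hS : ∀ i (g : Lp ℂ 2 μ), ⇑(S i g) =ᵐ[μ] fun x => (f i x : ℂ) * g (shift x))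
    (hS' : ∀ i (g : Lp ℂ 2 μ'), ⇑(S' i g) =ᵐ[μ'] fun x => (f' i x : ℂ) * g (shift x))
    (W : Lp ℂ 2 μ →L[ℂ] Lp ℂ 2 μ')
    (hW : ∀ i, W.comp (S i) = (S' i).comp W) :
    W = 0 :=
  nonneg_monicSystem_disjoint_of_mutuallySingular_general μ μ' f f' hf2 hac hrn hrn' hne hsing S S'
    hS hS' W hW
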